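/- There exists a two-agent, two-timestep deterministic decision problem with state space ℤ, actions in {1,2} for each agent, dynamics s_{t+1} = s_t + a_t^1 + a_t^2, initial state 0, discount 1, and reward functions R^1, R^2 : ℤ × ({1,2}×{1,2}) → ℝ, such that an action pair sequence (a_1, a_2) maximizing min_i (R^i(s_1, a_1) + R^i(s_2, a_2)) necessarily uses, at the second timestep, an action pair that is NOT a maximizer of min_i R^i(s_2, ·) for the state s_2 reached. In other words, the principle of dynamic programming fails for the max-min multi-agent objective. -/
import Mathlib


/-- value of a joint action: each agent's action is in {1,2}, encoded as `Fin 2` via `+1`. -/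
def aval (a : Fin 2 × Fin 2) : ℤ := ((a.1 : ℤ) + 1) + ((a.2 : ℤ) + 1)

/-- The principle of dynamic programming fails for the two-agent max-min objective:
there exist rewards such that every maximizer of the two-step max-min objective uses,
at the second timestep, an action pair that is not a maximizer of the single-step
max-min problem at the state reached. -/
theorem dynamic_programming_fails_for_maxmin :
    ∃ R1 R2 : ℤ → (Fin 2 × Fin 2) → ℝ,
      (∃ a1 a2 : Fin 2 × Fin 2,
        ∀ b1 b2 : Fin 2 × Fin 2,
          min (R1 0 b1 + R1 (0 + aval b1) b2) (R2 0 b1 + R2 (0 + aval b1) b2) ≤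
          min (R1 0 a1 + R1 (0 + aval a1) a2) (R2 0 a1 + R2 (0 + aval a1) a2)) ∧
      (∀ a1 a2 : Fin 2 × Fin 2,
        (∀ b1 b2 : Fin 2 × Fin 2,
          min (R1 0 b1 + R1 (0 + aval b1) b2) (R2 0 b1 + R2 (0 + aval b1) b2) ≤
          min (R1 0 a1 + R1 (0 + aval a1) a2) (R2 0 a1 + R2 (0 + aval a1) a2)) →
        ∃ b : Fin 2 × Fin 2,
          min (R1 (0 + aval a1) a2) (R2 (0 + aval a1) a2) <
          min (R1 (0 + aval a1) b) (R2 (0 + aval a1) b)) := by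
  refine ⟨(fun s a => if s = 0 then 0 else
            if a = (0, 0) then 1 else if a = (1, 1) then 2 else -100),
          (fun s a => if s = 0 then 10 else
            if a = (0, 0) then 1 else if a = (1, 1) then -5 else -100), ?_, ?_⟩
  · refine ⟨(0, 0), (1, 1), fun b1 b2 => ?_⟩
    fin_cases b1 <;> fin_cases b2 <;> norm_num [aval]
  · intro a1 a2 h
    fin_cases a1 <;> fin_cases a2 <;>
      [skip; skip; skip; exact ⟨(0,0), by norm_num [aval]⟩;
       skip; skip; skip; exact ⟨(0,0), by norm_num [aval]⟩;
       skip; skip; skip; exact ⟨(0,0), by norm_num [aval]⟩;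
       skip; skip; skip; exact ⟨(0,0), by norm_num [aval]⟩] <;>
      (exfalso; have := h (0, 0) (1, 1); norm_num [aval] at this)
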